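/- For every even integer n ≥ 2, Cov(n, n/2) = (1/4)·( 2^{−(n/2−1)}·binom(n/2−1, ⌊n/4⌋) )². Moreover, there exists a constant C > 0 such that for all even integers n ≥ 4, | Cov(n, n/2) − 1/(π(n−2)) | ≤ C/n². -/

import Mathlib

open Real

/-- Binomial coefficient with an integer lower index, with the convention that it
vanishes for negative lower index (and, via `Nat.choose`, above the upper index). -/
def ibinom (a : ℕ) (b : ℤ) : ℕ := if 0 ≤ b then a.choose b.toNat else 0

/-- The fold covariance of k-fold cross-validation of the Majority algorithm on `n`
i.i.d. uniformly random binary labels with fold size `m = n/k`: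
`Cov(n, m) = 2^{-n} · Σ_{j=0}^{m-1} binom(m-1, j)² · binom(n-2m, ⌊(n-m)/2⌋ - j)`. -/
noncomputable def Cov (n m : ℕ) : ℝ :=
  (2 : ℝ)⁻¹ ^ n * ∑ j ∈ Finset.range m,
    ((m - 1).choose j : ℝ) ^ 2 * (ibinom (n - 2 * m) (((n : ℤ) - m) / 2 - j) : ℝ)

/-! For even `n = 2m` the last binomial in `Cov(n, n/2)` is `binom(0, ⌊m/2⌋ - j)`, so only the term
`j = ⌊m/2⌋` survives, and `2^{-(m-1)} binom(m-1, ⌊m/2⌋)` is the normalized central binomial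
coefficient `c_k = binom(2k, k)/4^k` with `k = ⌊n/4⌋`. Wallis' partial product satisfies
`c_k² (2k+1) W_k = 1` and `π/2 · (2k+1)/(2k+2) ≤ W_k ≤ π/2`, so `Cov(n, n/2) = 1/(4(2k+1)W_k)` lies
between `1/(π(n+2))` and `1/(π(n-2))`, whose difference is `O(n⁻²)`. -/

open Real.Wallis

lemma ibinom_zero_left (b : ℤ) : ibinom 0 b = if b = 0 then 1 else 0 := by
  unfold ibinom
  split_ifs with hb hb0 hb0 <;> try omega
  · simp [hb0]
  · exact Nat.choose_eq_zero_of_lt (by omega)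

theorem Cov_two_mul_self {m : ℕ} (hm : 0 < m) :
    Cov (2 * m) m = 1 / 4 * ((2 : ℝ)⁻¹ ^ (m - 1) * ((m - 1).choose (m / 2) : ℝ)) ^ 2 := by
  have hterm : ∀ j ∈ Finset.range m,
      ((m - 1).choose j : ℝ) ^ 2 * (ibinom (2 * m - 2 * m) ((((2 * m : ℕ) : ℤ) - m) / 2 - j) : ℝ)
        = if m / 2 = j then ((m - 1).choose j : ℝ) ^ 2 else 0 := by
    intro j _
    rw [Nat.sub_self, ibinom_zero_left]
    by_cases h : m / 2 = j <;> simp [h] <;> omega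
  rw [Cov, Finset.sum_congr rfl hterm, Finset.sum_ite_eq,
    if_pos (Finset.mem_range.mpr (Nat.div_lt_self hm one_lt_two))]
  obtain ⟨k, rfl⟩ := Nat.exists_eq_add_of_lt hm
  simp only [Nat.zero_add, Nat.add_sub_cancel, mul_add, mul_one]
  ring

theorem Cov_half_of_even {n : ℕ} (hn : Even n) (h2 : 2 ≤ n) :
    Cov n (n / 2) =
      1 / 4 * ((2 : ℝ)⁻¹ ^ (n / 2 - 1) * ((n / 2 - 1).choose (n / 4) : ℝ)) ^ 2 := by
  obtain ⟨m, rfl⟩ := hn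
  rw [← two_mul, Nat.mul_div_cancel_left _ two_pos, show 2 * m / 4 = m / 2 by omega]
  exact Cov_two_mul_self (by omega)

noncomputable def normalizedCentralBinom (k : ℕ) : ℝ := k.centralBinom / 4 ^ k

theorem two_inv_pow_mul_choose_half {m : ℕ} (hm : 0 < m) :
    (2 : ℝ)⁻¹ ^ (m - 1) * ((m - 1).choose (m / 2) : ℝ) = normalizedCentralBinom (m / 2) := by
  rcases Nat.even_or_odd' m with ⟨k, rfl | rfl⟩
  · obtain ⟨k, rfl⟩ := Nat.exists_eq_add_of_lt (Nat.pos_of_mul_pos_left hm)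
    have hcb : (k + 1).centralBinom = 2 * (2 * k + 1).choose k := by
      rw [Nat.centralBinom_eq_two_mul_choose, show 2 * (k + 1) = 2 * k + 1 + 1 by ring,
        Nat.choose_succ_succ', Nat.choose_symm_half]
      ring
    rw [show 2 * (0 + k + 1) - 1 = 2 * k + 1 by omega, show 2 * (0 + k + 1) / 2 = k + 1 by omega,
      Nat.choose_symm_half, normalizedCentralBinom, hcb]
    push_cast
    rw [show (4 : ℝ) = 2 ^ 2 by norm_num, ← pow_mul, inv_pow]
    field_simp
    ring
  · rw [show 2 * k + 1 - 1 = 2 * k by omega, show (2 * k + 1) / 2 = k by omega,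
      normalizedCentralBinom, Nat.centralBinom_eq_two_mul_choose, pow_mul,
      show (2 : ℝ)⁻¹ ^ 2 = 4⁻¹ by norm_num, inv_pow, div_eq_inv_mul]

theorem normalizedCentralBinom_sq_mul_W (k : ℕ) :
    normalizedCentralBinom k ^ 2 * ((2 * k + 1) * W k) = 1 := by
  have hfac : ((2 * k).choose k : ℝ) * k.factorial * k.factorial = (2 * k).factorial := by
    exact_mod_cast (show 2 * k - k = k by omega) ▸ Nat.choose_mul_factorial_mul_factorial
      (show k ≤ 2 * k by omega)
  have : ((2 * k).choose k : ℝ) ≠ 0 := Nat.cast_ne_zero.mpr (Nat.choose_pos (by omega)).ne'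
  have : (k.factorial : ℝ) ≠ 0 := by positivity
  rw [normalizedCentralBinom, W_eq_factorial_ratio, Nat.centralBinom_eq_two_mul_choose, ← hfac,
    show (4 : ℝ) = 2 ^ 2 by norm_num, ← pow_mul]
  field_simp
  ring

theorem pi_mul_le_two_mul_add_one_mul_W (k : ℕ) : π * k ≤ (2 * k + 1) * W k := by
  have h := le_W k
  rw [div_mul_eq_mul_div, div_le_iff₀ (by positivity)] at h
  nlinarith [pi_pos]

theorem two_mul_add_one_mul_W_le (k : ℕ) : (2 * k + 1) * W k ≤ π * (k + 1 / 2) := by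
  nlinarith [W_le k]

theorem Cov_half_eq_inv {n : ℕ} (hn : Even n) (h2 : 2 ≤ n) :
    Cov n (n / 2) = (4 * ((2 * (n / 4 : ℕ) + 1) * W (n / 4)))⁻¹ := by
  rw [Cov_half_of_even hn h2, show n / 4 = n / 2 / 2 by omega,
    two_inv_pow_mul_choose_half (by omega), mul_inv,
    ← eq_inv_of_mul_eq_one_left (normalizedCentralBinom_sq_mul_W _)]
  norm_num

theorem Cov_half_mem_Icc {n : ℕ} (hn : Even n) (h2 : 2 < n) :
    Cov n (n / 2) ∈ Set.Icc (1 / (π * (n + 2))) (1 / (π * (n - 2))) := by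
  have hlo : (n : ℝ) - 2 ≤ 4 * (n / 4 : ℕ) := by
    have : n ≤ 4 * (n / 4) + 2 := by obtain ⟨m, rfl⟩ := hn; omega
    rw [sub_le_iff_le_add]
    exact_mod_cast this
  have hhi : 4 * ((n / 4 : ℕ) : ℝ) ≤ n := by exact_mod_cast Nat.mul_div_le n 4
  have hn2 : (2 : ℝ) < n := by exact_mod_cast h2
  have hT_lo := pi_mul_le_two_mul_add_one_mul_W (n / 4)
  have hT_hi := two_mul_add_one_mul_W_le (n / 4)
  rw [Cov_half_eq_inv hn h2.le, one_div, one_div]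
  constructor
  · apply inv_anti₀ (mul_pos four_pos (mul_pos (by positivity) (W_pos _)))
    nlinarith [pi_pos]
  · apply inv_anti₀ (mul_pos pi_pos (by linarith))
    nlinarith [pi_pos]

/-- **2-fold endpoint (`m = n/2`).**
For even `n`, `Cov(n, n/2) = (1/4)·(2^{-(n/2-1)}·binom(n/2-1, ⌊n/4⌋))²`, and
`Cov(n, n/2) = 1/(π(n-2)) + O(n^{-2})`. -/
theorem cov_twofold_endpoint :
    (∀ n : ℕ, 2 ≤ n → Even n →
      Cov n (n / 2) =
        (1 / 4) * ((2 : ℝ)⁻¹ ^ (n / 2 - 1) * ((n / 2 - 1).choose (n / 4) : ℝ)) ^ 2) ∧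
    ∃ C : ℝ, 0 < C ∧ ∀ n : ℕ, 4 ≤ n → Even n →
      |Cov n (n / 2) - 1 / (π * ((n : ℝ) - 2))| ≤ C / (n : ℝ) ^ 2 := by
  refine ⟨fun n h2 hn => Cov_half_of_even hn h2, 2, two_pos, fun n h4 hn => ?_⟩
  obtain ⟨hlo, hhi⟩ := Cov_half_mem_Icc hn (by omega)
  have hn4 : (4 : ℝ) ≤ n := by exact_mod_cast h4
  calc |Cov n (n / 2) - 1 / (π * ((n : ℝ) - 2))|
      ≤ 1 / (π * (n - 2)) - 1 / (π * (n + 2)) := abs_le.mpr ⟨by linarith, by linarith⟩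
    _ = 4 / (π * ((n : ℝ) ^ 2 - 4)) := by
      have : (n : ℝ) - 2 ≠ 0 := by linarith
      have : (n : ℝ) ^ 2 - 4 ≠ 0 := by nlinarith
      field_simp
      ring
    _ ≤ 2 / (n : ℝ) ^ 2 := by
      rw [div_le_div_iff₀ (mul_pos pi_pos (by nlinarith)) (by positivity)]
      have hn16 : (16 : ℝ) ≤ n ^ 2 := by nlinarith
      nlinarith [mul_le_mul_of_nonneg_right pi_gt_three.le (by linarith : (0 : ℝ) ≤ n ^ 2 - 4)]
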